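/- arXiv:2306.03798 — 2 statements merged into one kernel-verified Lean document; each statement's English description precedes it below -/
import Mathlib

section
/- Let f be an entire function with positive Maclaurin coefficients a_n > 0, let P(r) = Σ_{n=0}^∞ p_n a_n r^n / f(r) for a decreasing sequence of probabilities 1 ≥ p_0 ≥ p_1 ≥ ⋯ ≥ 0, and for r > 0 let N_r be a random variable with P(N_r = n) = a_n r^n / f(r). Then for every n and every r > 0, P(r) - P(N_r ≤ n) ≤ p_n ≤ P(r) + P(N_r ≥ n). -/
/-!
Write `w m = a m * r ^ m`, so that `f r = ∑ w m` and `P(r) f(r) = ∑ p m w m`. Then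
`P(r) f(r) - p n f(r) = ∑ (p m - p n) w m`. Since `p` is antitone with values in `[0, 1]`,
the summands with `m ≤ n` lie in `[0, w m]` and those with `m > n` are nonpositive, which gives
the lower bound; symmetrically, the summands of `∑ (p n - p m) w m` are nonpositive for `m < n`
and at most `w m` for `m ≥ n`, which gives the upper bound.
-/

open Finset

theorem summable_mul_of_nonneg_of_le_one {w p : ℕ → ℝ} (hw : ∀ m, 0 ≤ w m) (hws : Summable w)
    (hp0 : ∀ m, 0 ≤ p m) (hp1 : ∀ m, p m ≤ 1) : Summable fun m => p m * w m :=
  hws.of_nonneg_of_le (fun m => mul_nonneg (hp0 m) (hw m))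
    fun m => mul_le_of_le_one_left (hw m) (hp1 m)

theorem tsum_mul_sub_mul_tsum_le_sum_range {w p : ℕ → ℝ} (hw : ∀ m, 0 ≤ w m)
    (hws : Summable w) (hp : Antitone p) (hp0 : ∀ m, 0 ≤ p m) (hp1 : ∀ m, p m ≤ 1) (n : ℕ) :
    ∑' m, p m * w m - p n * ∑' m, w m ≤ ∑ m ∈ range (n + 1), w m := by
  have hpw := summable_mul_of_nonneg_of_le_one hw hws hp0 hp1
  have hd : Summable fun m => (p m - p n) * w m := by
    simpa only [sub_mul] using hpw.sub (hws.mul_left (p n))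
  calc ∑' m, p m * w m - p n * ∑' m, w m
      = ∑' m, (p m - p n) * w m := by
        simp_rw [sub_mul]
        rw [hpw.tsum_sub (hws.mul_left _), hws.tsum_mul_left]
    _ = ∑ m ∈ range (n + 1), (p m - p n) * w m
          + ∑' m, (p (m + (n + 1)) - p n) * w (m + (n + 1)) :=
        (hd.sum_add_tsum_nat_add _).symm
    _ ≤ ∑ m ∈ range (n + 1), w m + 0 :=
        add_le_add
          (sum_le_sum fun m _ => mul_le_of_le_one_left (hw m) (by linarith [hp1 m, hp0 n]))
          (tsum_nonpos fun m =>
            mul_nonpos_of_nonpos_of_nonneg (sub_nonpos.2 (hp (by omega))) (hw _))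
    _ = ∑ m ∈ range (n + 1), w m := add_zero _

theorem mul_tsum_sub_tsum_mul_le_tsum_nat_add {w p : ℕ → ℝ} (hw : ∀ m, 0 ≤ w m)
    (hws : Summable w) (hp : Antitone p) (hp0 : ∀ m, 0 ≤ p m) (hp1 : ∀ m, p m ≤ 1) (n : ℕ) :
    p n * ∑' m, w m - ∑' m, p m * w m ≤ ∑' m, w (n + m) := by
  have hpw := summable_mul_of_nonneg_of_le_one hw hws hp0 hp1
  have hd : Summable fun m => (p n - p m) * w m := by
    simpa only [sub_mul] using (hws.mul_left (p n)).sub hpw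
  calc p n * ∑' m, w m - ∑' m, p m * w m
      = ∑' m, (p n - p m) * w m := by
        simp_rw [sub_mul]
        rw [(hws.mul_left _).tsum_sub hpw, hws.tsum_mul_left]
    _ = ∑ m ∈ range n, (p n - p m) * w m + ∑' m, (p n - p (m + n)) * w (m + n) :=
        (hd.sum_add_tsum_nat_add _).symm
    _ ≤ 0 + ∑' m, w (m + n) :=
        add_le_add
          (sum_nonpos fun m hm => mul_nonpos_of_nonpos_of_nonneg
            (sub_nonpos.2 (hp (mem_range.1 hm).le)) (hw m))
          (Summable.tsum_le_tsum
            (fun m => mul_le_of_le_one_left (hw _) (by linarith [hp1 n, hp0 (m + n)]))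
            ((summable_nat_add_iff n).2 hd) ((summable_nat_add_iff n).2 hws))
    _ = ∑' m, w (n + m) := by simp_rw [zero_add, add_comm]

/-- Sandwich inequality for generalized de-Poissonization of a monotone sequence of
probabilities: `P(r) - P(N_r ≤ n) ≤ p_n ≤ P(r) + P(N_r ≥ n)`. -/
theorem stmt_7 (a : ℕ → ℝ) (f : ℝ → ℝ)
    (ha : ∀ n, 0 < a n)
    (hf : ∀ r : ℝ, HasSum (fun n => a n * r ^ n) (f r))
    (p : ℕ → ℝ) (hp1 : p 0 ≤ 1) (hp0 : ∀ n, 0 ≤ p n) (hmono : ∀ n, p (n + 1) ≤ p n)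
    (n : ℕ) (r : ℝ) (hr : 0 < r) :
    (∑' m : ℕ, p m * a m * r ^ m) / f r
        - (∑ m ∈ Finset.range (n + 1), a m * r ^ m) / f r ≤ p n ∧
      p n ≤ (∑' m : ℕ, p m * a m * r ^ m) / f r
        + (∑' m : ℕ, a (n + m) * r ^ (n + m)) / f r := by
  have hw : ∀ m, 0 ≤ a m * r ^ m := fun m => mul_nonneg (ha m).le (pow_nonneg hr.le m)
  have hfr : f r = ∑' m, a m * r ^ m := (hf r).tsum_eq.symm
  have hpos : 0 < f r := hfr ▸ (hf r).summable.tsum_pos hw 0 (by simpa using ha 0)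
  have hp : Antitone p := antitone_nat_of_succ_le hmono
  have hp1' : ∀ m, p m ≤ 1 := fun m => (hp m.zero_le).trans hp1
  have lower := tsum_mul_sub_mul_tsum_le_sum_range hw (hf r).summable hp hp0 hp1' n
  have upper := mul_tsum_sub_tsum_mul_le_tsum_nat_add hw (hf r).summable hp hp0 hp1' n
  rw [← hfr] at lower upper
  simp_rw [mul_assoc (p _)]
  constructor
  · rw [div_sub_div_same, div_le_iff₀ hpos]
    linarith
  · rw [← add_div, le_div_iff₀ hpos]
    linarith
end

section
/- For the Chazy I recursion (n+1)(n² - l²) a_{n+1} - 16(n-2) a_{n-1} + 2 Σ_{m=2}^{n-1} m a_m (3(n-m)+1) a_{n+1-m} = 0 (n = 2,3,...), with integer parameter l ≥ 3 and initial value a_2 = 1, the recursion forces a_3 = a_4 = ⋯ = a_l = 0. -/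
/-!
Induct on `n < l`: once `a 3, …, a n` vanish, every product `a m * a (n + 1 - m)` in the
quadratic sum has a vanishing factor unless `m = n + 1 - m = 2`, i.e. `n = 3`, where the sum
exactly cancels the linear term `-16 a 2` because `a 2 = 1`. Since `n ^ 2 - l ^ 2 ≠ 0` for
`n < l`, the recursion then forces `a (n + 1) = 0`.
-/

namespace Chazy

noncomputable def lowerTerms (a : ℕ → ℝ) (n : ℕ) : ℝ :=
  -16 * ((n : ℝ) - 2) * a (n - 1)
    + 2 * ∑ m ∈ Finset.Icc 2 (n - 1),
      (m : ℝ) * a m * (3 * ((n : ℝ) - (m : ℝ)) + 1) * a (n + 1 - m)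

variable {a : ℕ → ℝ} {n : ℕ}

theorem quadratic_sum_eq_zero (hn : 4 ≤ n) (hvan : ∀ j, 3 ≤ j → j ≤ n → a j = 0) :
    ∑ m ∈ Finset.Icc 2 (n - 1),
      (m : ℝ) * a m * (3 * ((n : ℝ) - (m : ℝ)) + 1) * a (n + 1 - m) = 0 := by
  refine Finset.sum_eq_zero fun m hm => ?_
  rw [Finset.mem_Icc] at hm
  rcases hm.1.eq_or_lt with rfl | hm2
  · rw [hvan (n + 1 - 2) (by omega) (by omega), mul_zero]
  · rw [hvan m hm2 (by omega), mul_zero, zero_mul, zero_mul]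

theorem lowerTerms_eq_zero (ha2 : a 2 = 1) (hn : 2 ≤ n)
    (hvan : ∀ j, 3 ≤ j → j ≤ n → a j = 0) : lowerTerms a n = 0 := by
  unfold lowerTerms
  rcases (show n = 2 ∨ n = 3 ∨ 4 ≤ n by omega) with rfl | rfl | hn4
  · norm_num
  · norm_num [ha2]
  · rw [quadratic_sum_eq_zero hn4 hvan, hvan (n - 1) (by omega) (by omega)]
    ring

theorem leadingCoeff_ne_zero {l : ℕ} (hnl : n < l) :
    ((n : ℝ) + 1) * ((n : ℝ) ^ 2 - (l : ℝ) ^ 2) ≠ 0 := by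
  have hlt : (n : ℝ) ^ 2 < (l : ℝ) ^ 2 := by gcongr
  exact mul_ne_zero (by positivity) (sub_ne_zero.mpr hlt.ne)

end Chazy

open Chazy in
theorem stmt_17_general (l : ℕ) (a : ℕ → ℝ) (ha2 : a 2 = 1)
    (hrec : ∀ n : ℕ, 2 ≤ n →
      ((n : ℝ) + 1) * ((n : ℝ) ^ 2 - (l : ℝ) ^ 2) * a (n + 1)
          - 16 * ((n : ℝ) - 2) * a (n - 1)
          + 2 * ∑ m ∈ Finset.Icc 2 (n - 1),
              (m : ℝ) * a m * (3 * ((n : ℝ) - (m : ℝ)) + 1) * a (n + 1 - m) = 0) :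
    ∀ k : ℕ, 3 ≤ k → k ≤ l → a k = 0 := by
  suffices h : ∀ n, 2 ≤ n → n ≤ l → ∀ j, 3 ≤ j → j ≤ n → a j = 0 by
    intro k hk3 hkl
    exact h k (by omega) hkl k hk3 le_rfl
  intro n hn
  induction n, hn using Nat.le_induction with
  | base => intro _ j hj3 hj2; omega
  | succ n hn ih =>
    intro hnl
    have hvan := ih (by omega)
    have hlower := lowerTerms_eq_zero ha2 hn hvan
    have hnext : a (n + 1) = 0 := by
      have hstep := hrec n hn
      rw [lowerTerms] at hlower
      have hcoef : ((n : ℝ) + 1) * ((n : ℝ) ^ 2 - (l : ℝ) ^ 2) ≠ 0 :=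
        leadingCoeff_ne_zero (by omega)
      exact (mul_eq_zero.mp (by linarith)).resolve_left hcoef
    intro j hj3 hjn
    rcases (show j ≤ n ∨ j = n + 1 by omega) with hjn' | rfl
    · exact hvan j hj3 hjn'
    · exact hnext

/-- For the Chazy I recursion with integer parameter `l ≥ 3` and `a_2 = 1`, the recursion
forces `a_3 = a_4 = ⋯ = a_l = 0`. -/
theorem stmt_17 (l : ℕ) (hl : 3 ≤ l) (a : ℕ → ℝ) (ha2 : a 2 = 1)
    (hrec : ∀ n : ℕ, 2 ≤ n →
      ((n : ℝ) + 1) * ((n : ℝ) ^ 2 - (l : ℝ) ^ 2) * a (n + 1)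
          - 16 * ((n : ℝ) - 2) * a (n - 1)
          + 2 * ∑ m ∈ Finset.Icc 2 (n - 1),
              (m : ℝ) * a m * (3 * ((n : ℝ) - (m : ℝ)) + 1) * a (n + 1 - m) = 0) :
    ∀ k : ℕ, 3 ≤ k → k ≤ l → a k = 0 :=
  stmt_17_general l a ha2 hrec
end
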